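/- Let V be a finite-dimensional complex inner product space, ξ a self-adjoint endomorphism of V, and b an endomorphism of V. Assume b preserves the increasing eigen-filtration of ξ, i.e., P_μ ∘ b ∘ P_λ = 0 for every pair of eigenvalues λ < μ of ξ. Then the function t ↦ ‖exp(tξ) ∘ b ∘ exp(−tξ)‖ (Hilbert–Schmidt norm) is antitone on [0, ∞); in particular ‖exp(tξ) ∘ b ∘ exp(−tξ)‖ ≤ ‖b‖ for all t ≥ 0. -/

import Mathlib

set_option maxHeartbeats 1000000


open scoped Topology InnerProductSpace

variable {V : Type*} [NormedAddCommGroup V] [InnerProductSpace ℂ V] [FiniteDimensional ℂ V]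

/-- The Hilbert–Schmidt norm `‖b‖ = √(tr (b ∘ b*))` on endomorphisms of a
finite-dimensional complex inner product space. -/
noncomputable def hsNorm (b : V →L[ℂ] V) : ℝ :=
  Real.sqrt (LinearMap.trace ℂ V
    ((b ∘L ContinuousLinearMap.adjoint b : V →L[ℂ] V) : V →ₗ[ℂ] V)).re

/-- The orthogonal projection onto the eigenspace `ker (ξ - λ·id)`, regarded as an
endomorphism of `V`. -/
noncomputable def eigProj (ξ : V →L[ℂ] V) (lam : ℝ) : V →L[ℂ] V :=
  (Module.End.eigenspace (ξ : V →ₗ[ℂ] V) (lam : ℂ)).subtypeL ∘L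
    Submodule.orthogonalProjectionOnto (Module.End.eigenspace (ξ : V →ₗ[ℂ] V) (lam : ℂ))

lemma exp_apply_eigen (A : V →L[ℂ] V) (c : ℂ) (x : V) (h : A x = c • x) :
    NormedSpace.exp A x = Complex.exp c • x := by
  have hpow : ∀ n : ℕ, (A ^ n) x = c ^ n • x := by
    intro n
    induction n with
    | zero => simp
    | succ n ih =>
        rw [pow_succ, ContinuousLinearMap.mul_apply, h, map_smul, ih, smul_smul,
          mul_comm, ← pow_succ]
  have hsum : Summable fun n : ℕ => (n.factorial : ℂ)⁻¹ • A ^ n :=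
    NormedSpace.expSeries_summable' (𝕂 := ℂ) A
  have h1 : NormedSpace.exp A x = ∑' n : ℕ, ((n.factorial : ℂ)⁻¹ • A ^ n) x := by
    rw [NormedSpace.exp_eq_tsum ℂ]
    exact (ContinuousLinearMap.apply ℂ V x).map_tsum hsum
  rw [h1]
  have h2 : ∀ n : ℕ, ((n.factorial : ℂ)⁻¹ • A ^ n) x = ((n.factorial : ℂ)⁻¹ * c ^ n) • x := by
    intro n; rw [ContinuousLinearMap.smul_apply, hpow, smul_smul]
  simp_rw [h2]
  rw [Summable.tsum_smul_const, Complex.exp_eq_exp_ℂ, NormedSpace.exp_eq_tsum ℂ]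
  · exact congrArg (· • x) (tsum_congr fun n => (smul_eq_mul (α := ℂ) _ _).symm)
  · simpa [smul_eq_mul] using NormedSpace.expSeries_summable' (𝕂 := ℂ) c

lemma hsNorm_eq {ι : Type*} [Fintype ι] [DecidableEq ι] (e : OrthonormalBasis ι ℂ V)
    (c : V →L[ℂ] V) :
    hsNorm c = Real.sqrt (∑ i, ∑ j, ‖⟪e i, c (e j)⟫_ℂ‖ ^ 2) := by
  have htr : (LinearMap.trace ℂ V
      ((c ∘L ContinuousLinearMap.adjoint c : V →L[ℂ] V) : V →ₗ[ℂ] V)) =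
      ∑ i, ⟪e i, (c ∘L ContinuousLinearMap.adjoint c) (e i)⟫_ℂ := by
    rw [LinearMap.trace_eq_matrix_trace ℂ e.toBasis, Matrix.trace]
    refine Finset.sum_congr rfl fun i _ => ?_
    rw [Matrix.diag_apply, LinearMap.toMatrix_apply, e.coe_toBasis_repr_apply,
      e.repr_apply_apply, e.coe_toBasis]
    rfl
  have key : ∀ i, ⟪e i, (c ∘L ContinuousLinearMap.adjoint c) (e i)⟫_ℂ =
      ∑ j, (starRingEnd ℂ) ⟪e i, c (e j)⟫_ℂ * ⟪e i, c (e j)⟫_ℂ := by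
    intro i
    have hx : (ContinuousLinearMap.adjoint c) (e i)
        = ∑ j, ⟪e j, (ContinuousLinearMap.adjoint c) (e i)⟫_ℂ • e j := by
      conv_lhs => rw [← e.sum_repr ((ContinuousLinearMap.adjoint c) (e i))]
      simp_rw [e.repr_apply_apply]
    rw [ContinuousLinearMap.comp_apply]
    conv_lhs => rw [hx]
    rw [map_sum, inner_sum]
    refine Finset.sum_congr rfl fun j _ => ?_
    rw [map_smul, inner_smul_right]
    congr 1
    rw [← ContinuousLinearMap.adjoint_inner_left, ← inner_conj_symm,
      ContinuousLinearMap.adjoint_adjoint]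
  have hre : ∀ z : ℂ, ((starRingEnd ℂ) z * z).re = ‖z‖ ^ 2 := by
    intro z
    rw [← Complex.normSq_eq_conj_mul_self]
    simp [Complex.normSq_eq_norm_sq, ← Complex.ofReal_pow]
  rw [hsNorm, htr]
  congr 1
  rw [Complex.re_sum]
  refine Finset.sum_congr rfl fun i _ => ?_
  rw [key, Complex.re_sum]
  exact Finset.sum_congr rfl fun j _ => hre _

theorem antitoneOn_hsNorm_exp_conj_of_filtration (ξ : V →L[ℂ] V) (hξ : IsSelfAdjoint ξ)
    (b : V →L[ℂ] V)
    (hfil : ∀ lam mu : ℝ, Module.End.HasEigenvalue (ξ : V →ₗ[ℂ] V) (lam : ℂ) →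
      Module.End.HasEigenvalue (ξ : V →ₗ[ℂ] V) (mu : ℂ) → lam < mu →
      eigProj ξ mu ∘L b ∘L eigProj ξ lam = 0) :
    AntitoneOn
      (fun t : ℝ => hsNorm (NormedSpace.exp (t • ξ) ∘L b ∘L NormedSpace.exp (-(t • ξ))))
      (Set.Ici 0) ∧
    ∀ t : ℝ, 0 ≤ t →
      hsNorm (NormedSpace.exp (t • ξ) ∘L b ∘L NormedSpace.exp (-(t • ξ))) ≤ hsNorm b := by
  have hs : (ξ : V →ₗ[ℂ] V).IsSymmetric := hξ.isSymmetric
  set n := Module.finrank ℂ V with hn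
  have hrank : Module.finrank ℂ V = n := rfl
  set e := hs.eigenvectorBasis hrank with he
  set lam := hs.eigenvalues hrank with hlam
  -- ξ on basis vectors
  have hξe : ∀ j, ξ (e j) = ((lam j : ℝ) : ℂ) • e j := by
    intro j
    exact hs.apply_eigenvectorBasis hrank j
  have hsm : ∀ (t : ℝ) (j : Fin n), (t • ξ) (e j) = ((t * lam j : ℝ) : ℂ) • e j := by
    intro t j
    rw [ContinuousLinearMap.smul_apply, hξe, smul_comm, ← algebraMap_smul ℂ t (e j),
      Complex.coe_algebraMap, smul_smul, ← Complex.ofReal_mul, mul_comm]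
  -- exp applied to basis vectors
  have hexp : ∀ (t : ℝ) (j : Fin n),
      NormedSpace.exp (t • ξ) (e j) = Complex.exp ((t * lam j : ℝ) : ℂ) • e j :=
    fun t j => exp_apply_eigen _ _ _ (hsm t j)
  have hexpneg : ∀ (t : ℝ) (j : Fin n),
      NormedSpace.exp (-(t • ξ)) (e j) = Complex.exp ((-(t * lam j) : ℝ) : ℂ) • e j := by
    intro t j
    refine exp_apply_eigen _ _ _ ?_
    rw [ContinuousLinearMap.neg_apply, hsm, ← neg_smul, Complex.ofReal_neg]
  -- entries of the conjugated operator
  have h2 : ∀ (t : ℝ) (i : Fin n) (w : V),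
      ⟪e i, NormedSpace.exp (t • ξ) w⟫_ℂ =
        Complex.exp ((t * lam i : ℝ) : ℂ) * ⟪e i, w⟫_ℂ := by
    intro t i w
    conv_lhs => rw [← e.sum_repr w]
    rw [map_sum, inner_sum]
    have hterm : ∀ k, ⟪e i, NormedSpace.exp (t • ξ) (e.repr w k • e k)⟫_ℂ =
        e.repr w k * (Complex.exp ((t * lam k : ℝ) : ℂ) * ⟪e i, e k⟫_ℂ) := by
      intro k
      rw [map_smul, inner_smul_right, hexp t k, inner_smul_right]
    simp_rw [hterm, orthonormal_iff_ite.mp e.orthonormal i]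
    rw [Finset.sum_eq_single i]
    · rw [if_pos rfl, mul_one, e.repr_apply_apply]; ring
    · intro k _ hk; rw [if_neg (Ne.symm hk), mul_zero, mul_zero]
    · intro h; exact absurd (Finset.mem_univ i) h
  have hentry : ∀ (t : ℝ) (i j : Fin n),
      ⟪e i, (NormedSpace.exp (t • ξ) ∘L b ∘L NormedSpace.exp (-(t • ξ))) (e j)⟫_ℂ =
        Complex.exp ((t * lam i : ℝ) : ℂ) * Complex.exp ((-(t * lam j) : ℝ) : ℂ) *
          ⟪e i, b (e j)⟫_ℂ := by
    intro t i j
    rw [ContinuousLinearMap.comp_apply, ContinuousLinearMap.comp_apply, hexpneg, b.map_smul,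
      (NormedSpace.exp (t • ξ)).map_smul, inner_smul_right, h2]
    ring
  -- zero entries when eigenvalue decreases
  have hzero : ∀ i j : Fin n, lam j < lam i → ⟪e i, b (e j)⟫_ℂ = 0 := by
    intro i j hlt
    have h0 := hfil (lam j) (lam i) (hs.hasEigenvalue_eigenvalues hrank j)
      (hs.hasEigenvalue_eigenvalues hrank i) hlt
    have hPfix : ∀ k : Fin n, eigProj ξ (lam k) (e k) = e k := by
      intro k
      have hmem : e k ∈ Module.End.eigenspace (ξ : V →ₗ[ℂ] V) ((lam k : ℝ) : ℂ) :=
        (hs.hasEigenvector_eigenvectorBasis hrank k).1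
      have hp := Submodule.orthogonalProjectionOnto_mem_subspace_eq_self
        (K := Module.End.eigenspace (ξ : V →ₗ[ℂ] V) ((lam k : ℝ) : ℂ)) ⟨e k, hmem⟩
      rw [eigProj, ContinuousLinearMap.comp_apply]
      erw [hp]
      rfl
    have hPi : ∀ y : V, ⟪e i, eigProj ξ (lam i) y⟫_ℂ = ⟪e i, y⟫_ℂ := by
      intro y
      rw [eigProj, ContinuousLinearMap.comp_apply, Submodule.subtypeL_apply,
        ← Submodule.starProjection_apply, ← Submodule.inner_starProjection_left_eq_right,
        Submodule.starProjection_apply]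
      have := hPfix i
      rw [eigProj, ContinuousLinearMap.comp_apply, Submodule.subtypeL_apply] at this
      rw [this]
    calc ⟪e i, b (e j)⟫_ℂ
        = ⟪e i, (eigProj ξ (lam i) ∘L b ∘L eigProj ξ (lam j)) (e j)⟫_ℂ := by
          rw [ContinuousLinearMap.comp_apply, ContinuousLinearMap.comp_apply, hPfix j, hPi]
      _ = 0 := by rw [h0]; simp
  -- HS norm formula for the conjugated operator
  have hF : ∀ t : ℝ,
      hsNorm (NormedSpace.exp (t • ξ) ∘L b ∘L NormedSpace.exp (-(t • ξ))) =
        Real.sqrt (∑ i, ∑ j,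
          Real.exp (t * (lam i - lam j)) ^ 2 * ‖⟪e i, b (e j)⟫_ℂ‖ ^ 2) := by
    intro t
    rw [hsNorm_eq e]
    congr 1
    refine Finset.sum_congr rfl fun i _ => Finset.sum_congr rfl fun j _ => ?_
    rw [hentry, norm_mul, norm_mul]
    have hne : ∀ r : ℝ, ‖Complex.exp ((r : ℝ) : ℂ)‖ = Real.exp r := by
      intro r
      rw [Complex.norm_exp, Complex.ofReal_re]
    rw [hne, hne, ← Real.exp_add, mul_pow]
    congr 2
    ring
  have main : AntitoneOn
      (fun t : ℝ => hsNorm (NormedSpace.exp (t • ξ) ∘L b ∘L NormedSpace.exp (-(t • ξ))))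
      (Set.Ici 0) := by
    intro s hsmem t htmem hst
    simp only [hF]
    apply Real.sqrt_le_sqrt
    refine Finset.sum_le_sum fun i _ => Finset.sum_le_sum fun j _ => ?_
    by_cases hbz : ⟪e i, b (e j)⟫_ℂ = 0
    · simp [hbz]
    · have hle : lam i ≤ lam j := not_lt.mp fun h => hbz (hzero i j h)
      have hd : lam i - lam j ≤ 0 := by linarith
      have h1 : t * (lam i - lam j) ≤ s * (lam i - lam j) :=
        mul_le_mul_of_nonpos_right hst hd
      have h2' := Real.exp_le_exp.mpr h1
      have hsq := pow_le_pow_left₀ (Real.exp_nonneg _) h2' 2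
      exact mul_le_mul_of_nonneg_right hsq (by positivity)
  refine ⟨main, fun t ht => ?_⟩
  have h0 : hsNorm (NormedSpace.exp ((0 : ℝ) • ξ) ∘L b ∘L NormedSpace.exp (-((0 : ℝ) • ξ)))
      = hsNorm b := by
    rw [zero_smul, neg_zero, NormedSpace.exp_zero, ContinuousLinearMap.one_def,
      ContinuousLinearMap.comp_id, ContinuousLinearMap.id_comp]
  have := main Set.self_mem_Ici ht ht
  simpa only [h0] using this
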